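/- arXiv:2312.09236 — 3 statements merged into one kernel-verified Lean document; each statement's English description precedes it below -/
import Mathlib

section
/- Let β : ℝ → ℝ be continuous with β(s) ≥ b > 0 for all s ∈ [0, T], let x₀ ∈ ℝ, and suppose T ≥ (ln 2)/(2b). Let ᾱ = exp(−2∫₀^T β(s) ds), and let μ_T be the Gaussian measure on ℝ with mean exp(−∫₀^T β(s) ds) · x₀ and variance 1 − ᾱ (this is the time-T marginal law of the Ornstein–Uhlenbeck process dX_t = −β_t X_t dt + √(2β_t) dW_t started at x₀). Then for every measurable set A ⊆ ℝ, |μ_T(A) − γ(A)| ≤ (x₀² + 2) · exp(−bT), where γ is the standard Gaussian measure N(0,1); in particular the total variation distance between μ_T and N(0,1) decays exponentially in T. -/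
/-! The law `N(e^{-I} x₀, 1 - e^{-2I})`, where `I = ∫₀ᵀ β ≥ bT`, is compared with `N(0, 1)`
through `N(0, 1 - e^{-2I})`. Shifting the mean of `N(·, v)` by `m` moves the mass of any set by
at most `|m|` times the peak `1/√(2πv)` of the density: the two densities cross once, at the
midpoint of the means, and the excess mass beyond it is the mass of an interval of length `|m|`.
Shrinking the variance from `1` to `v ≤ 1` moves it by at most `1 - √v`, since
`√v • N(0, v) ≤ N(0, 1)` as measures. Both errors are `O(e^{-bT})`. -/

open MeasureTheory ProbabilityTheory Real Set
open scoped NNReal ENNReal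

section TotalVariation

variable {α : Type*} [MeasurableSpace α] {μ ν : Measure α} [IsProbabilityMeasure μ]
  [IsProbabilityMeasure ν]

lemma abs_measureReal_sub_le_of_forall_sub_le {δ : ℝ}
    (h : ∀ t, MeasurableSet t → μ.real t - ν.real t ≤ δ) {s : Set α} (hs : MeasurableSet s) :
    |μ.real s - ν.real s| ≤ δ := by
  have hcompl := h sᶜ hs.compl
  rw [measureReal_compl hs, measureReal_compl hs, probReal_univ, probReal_univ] at hcompl
  exact abs_sub_le_iff.2 ⟨h s hs, by linarith⟩

lemma abs_measureReal_sub_le_of_smul_le {c : ℝ≥0} (h : c • μ ≤ ν) {s : Set α}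
    (hs : MeasurableSet s) : |μ.real s - ν.real s| ≤ 1 - c := by
  have hdom : ∀ t, c * μ.real t ≤ ν.real t := fun t => by
    simpa [measureReal_def, ENNReal.toReal_mul] using
      ENNReal.toReal_mono (measure_ne_top ν t) (h t)
  have hc : (c : ℝ) ≤ 1 := by simpa using hdom univ
  refine abs_measureReal_sub_le_of_forall_sub_le (fun t _ => ?_) hs
  nlinarith [hdom t, measureReal_le_one (μ := μ) (s := t), measureReal_nonneg (μ := μ) (s := t)]

lemma abs_measureReal_sub_le_of_restrict_le {S : Set α} (hS : MeasurableSet S)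
    (hle : ν.restrict S ≤ μ.restrict S) (hge : μ.restrict Sᶜ ≤ ν.restrict Sᶜ)
    {s : Set α} (hs : MeasurableSet s) :
    |μ.real s - ν.real s| ≤ μ.real S - ν.real S := by
  refine abs_measureReal_sub_le_of_forall_sub_le (fun t ht => ?_) hs
  have hin : ν.real (S \ t) ≤ μ.real (S \ t) := by
    simpa [measureReal_def, Measure.restrict_apply' hS, inter_eq_left.2 sdiff_subset] using
      ENNReal.toReal_mono (measure_ne_top _ _) (hle (S \ t))
  have hout : μ.real (t \ S) ≤ ν.real (t \ S) := by
    simpa [measureReal_def, Measure.restrict_apply' hS.compl, sdiff_eq] using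
      ENNReal.toReal_mono (measure_ne_top _ _) (hge t)
  have := measureReal_inter_add_sdiff (μ := μ) (s := t) hS
  have := measureReal_inter_add_sdiff (μ := ν) (s := t) hS
  have := measureReal_inter_add_sdiff (μ := μ) (s := S) ht
  have := measureReal_inter_add_sdiff (μ := ν) (s := S) ht
  rw [inter_comm S t] at *
  linarith

end TotalVariation

section Gaussian

lemma gaussianPDFReal_le_gaussianPDFReal_iff {m₁ m₂ : ℝ} {v : ℝ≥0} (hv : v ≠ 0) (x : ℝ) :
    gaussianPDFReal m₁ v x ≤ gaussianPDFReal m₂ v x ↔ (x - m₂) ^ 2 ≤ (x - m₁) ^ 2 := by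
  have hv' : (0 : ℝ) < v := by positivity
  simp only [gaussianPDFReal_def]
  rw [mul_le_mul_iff_right₀ (by positivity), exp_le_exp,
    div_le_div_iff_of_pos_right (by positivity), neg_le_neg_iff]

lemma gaussianPDFReal_le_inv_sqrt (μ : ℝ) (v : ℝ≥0) (x : ℝ) :
    gaussianPDFReal μ v x ≤ (√(2 * π * v))⁻¹ := by
  rw [gaussianPDFReal_def]
  refine mul_le_of_le_one_right (by positivity) (exp_le_one_iff.2 ?_)
  exact div_nonpos_of_nonpos_of_nonneg (neg_nonpos.2 (sq_nonneg _)) (by positivity)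

lemma gaussianReal_restrict_le_of_gaussianPDFReal_le {m₁ m₂ : ℝ} {v₁ v₂ : ℝ≥0}
    (hv₁ : v₁ ≠ 0) (hv₂ : v₂ ≠ 0) {S : Set ℝ} (hS : MeasurableSet S)
    (h : ∀ x ∈ S, gaussianPDFReal m₁ v₁ x ≤ gaussianPDFReal m₂ v₂ x) :
    (gaussianReal m₁ v₁).restrict S ≤ (gaussianReal m₂ v₂).restrict S := by
  rw [gaussianReal_of_var_ne_zero _ hv₁, gaussianReal_of_var_ne_zero _ hv₂,
    restrict_withDensity hS, restrict_withDensity hS]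
  exact withDensity_mono <| (ae_restrict_iff' hS).2 <| ae_of_all _ fun x hx =>
    ENNReal.ofReal_le_ofReal (h x hx)

lemma gaussianReal_le_smul_volume (μ : ℝ) {v : ℝ≥0} (hv : v ≠ 0) :
    gaussianReal μ v ≤ ENNReal.ofReal (√(2 * π * v))⁻¹ • volume := by
  rw [gaussianReal_of_var_ne_zero _ hv, ← withDensity_const]
  exact withDensity_mono <| ae_of_all _ fun x =>
    ENNReal.ofReal_le_ofReal (gaussianPDFReal_le_inv_sqrt μ v x)

lemma measureReal_gaussianReal_Ico_le (μ : ℝ) {v : ℝ≥0} (hv : v ≠ 0) {a b : ℝ} (hab : a ≤ b) :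
    (gaussianReal μ v).real (Ico a b) ≤ (b - a) * (√(2 * π * v))⁻¹ := by
  have h := gaussianReal_le_smul_volume μ hv (Ico a b)
  rw [Measure.smul_apply, volume_Ico, smul_eq_mul, ← ENNReal.ofReal_mul (by positivity)] at h
  simpa [measureReal_def, hab, mul_comm] using ENNReal.toReal_mono ENNReal.ofReal_ne_top h

lemma sqrt_div_smul_gaussianReal_le (μ : ℝ) {v w : ℝ≥0} (hv : v ≠ 0) (hvw : v ≤ w) :
    NNReal.sqrt (v / w) • gaussianReal μ v ≤ gaussianReal μ w := by
  have hw : w ≠ 0 := (pos_of_ne_zero hv |>.trans_le hvw).ne'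
  have hv' : (0 : ℝ) < v := by positivity
  have hw' : (0 : ℝ) < w := by positivity
  rw [gaussianReal_of_var_ne_zero _ hv, gaussianReal_of_var_ne_zero _ hw, ENNReal.smul_def]
  refine le_of_eq_of_le (withDensity_smul' _ _ ENNReal.coe_ne_top).symm
    (withDensity_mono (ae_of_all _ fun x => ?_))
  have hpre : √(v / w : ℝ) * (√(2 * π * v))⁻¹ = (√(2 * π * w))⁻¹ := by
    rw [sqrt_div' _ hw'.le, sqrt_mul' _ hv'.le, sqrt_mul' _ hw'.le]
    field_simp
  have hexp : -(x - μ) ^ 2 / (2 * v) ≤ -(x - μ) ^ 2 / (2 * w) := by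
    rw [neg_div, neg_div, neg_le_neg_iff]
    gcongr
  simp only [Pi.smul_apply, smul_eq_mul, gaussianPDF, ← ENNReal.ofReal_coe_nnreal,
    Real.coe_sqrt, NNReal.coe_div]
  rw [← ENNReal.ofReal_mul (by positivity)]
  refine ENNReal.ofReal_le_ofReal ?_
  simp only [gaussianPDFReal_def]
  rw [← mul_assoc, hpre]
  gcongr

lemma abs_measureReal_gaussianReal_sub_le_one_sub_sqrt_div (μ : ℝ) {v w : ℝ≥0} (hv : v ≠ 0)
    (hvw : v ≤ w) {s : Set ℝ} (hs : MeasurableSet s) :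
    |(gaussianReal μ v).real s - (gaussianReal μ w).real s| ≤ 1 - √(v / w : ℝ) := by
  simpa using abs_measureReal_sub_le_of_smul_le (sqrt_div_smul_gaussianReal_le μ hv hvw) hs

lemma abs_measureReal_gaussianReal_sub_le_abs_sub_mul_inv_sqrt (m₁ m₂ : ℝ) {v : ℝ≥0}
    (hv : v ≠ 0) {s : Set ℝ} (hs : MeasurableSet s) :
    |(gaussianReal m₁ v).real s - (gaussianReal m₂ v).real s| ≤
      |m₁ - m₂| * (√(2 * π * v))⁻¹ := by
  wlog hm : m₂ ≤ m₁ generalizing m₁ m₂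
  · rw [abs_sub_comm, abs_sub_comm m₁]
    exact this m₂ m₁ (le_of_not_ge hm)
  set c := (m₁ + m₂) / 2 with hc
  have hS : MeasurableSet (Ici c) := measurableSet_Ici
  refine (abs_measureReal_sub_le_of_restrict_le hS ?_ ?_ hs).trans ?_
  · refine gaussianReal_restrict_le_of_gaussianPDFReal_le hv hv hS fun x hx => ?_
    have hcx : c ≤ x := hx
    rw [gaussianPDFReal_le_gaussianPDFReal_iff hv]
    nlinarith
  · refine gaussianReal_restrict_le_of_gaussianPDFReal_le hv hv hS.compl fun x hx => ?_
    have hxc : x < c := not_le.1 hx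
    rw [gaussianPDFReal_le_gaussianPDFReal_iff hv]
    nlinarith
  have hshift :
      (gaussianReal m₁ v).real (Ici c) = (gaussianReal m₂ v).real (Ici (c - (m₁ - m₂))) := by
    rw [← preimage_add_const_Ici, ← map_measureReal_apply (measurable_add_const _) hS,
      gaussianReal_map_add_const, add_sub_cancel]
  rw [hshift, ← measureReal_sdiff (Ici_subset_Ici.2 (by linarith)) hS, Ici_sdiff_Ici,
    abs_of_nonneg (sub_nonneg.2 hm)]
  simpa only [sub_sub_cancel] using
    measureReal_gaussianReal_Ico_le m₂ hv (a := c - (m₁ - m₂)) (b := c) (by linarith)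

lemma abs_measureReal_gaussianReal_sub_standard_le (m : ℝ) {a : ℝ} (ha₀ : 0 ≤ a)
    (ha : a ≤ 1 / 2) {s : Set ℝ} (hs : MeasurableSet s) :
    |(gaussianReal m (1 - a).toNNReal).real s - (gaussianReal 0 1).real s| ≤ |m| + a := by
  set v := (1 - a).toNNReal
  have hv : (v : ℝ) = 1 - a := Real.coe_toNNReal _ (by linarith)
  have hv₀ : v ≠ 0 := by
    rw [← NNReal.coe_ne_zero, hv]
    linarith
  have hv₁ : v ≤ 1 := by
    rw [← NNReal.coe_le_coe, hv, NNReal.coe_one]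
    linarith
  have hpeak : (√(2 * π * v))⁻¹ ≤ 1 :=
    inv_le_one_of_one_le₀ (one_le_sqrt.2 (by nlinarith [pi_gt_three]))
  have hmean := (abs_measureReal_gaussianReal_sub_le_abs_sub_mul_inv_sqrt m 0 hv₀ hs).trans
    (mul_le_of_le_one_right (abs_nonneg _) hpeak)
  have hvar := abs_measureReal_gaussianReal_sub_le_one_sub_sqrt_div 0 hv₀ hv₁ hs
  have hsqrt : (v : ℝ) ≤ √v := le_sqrt_self_iff.2 (NNReal.coe_le_one.2 hv₁)
  rw [NNReal.coe_one, div_one] at hvar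
  rw [sub_zero] at hmean
  linarith [abs_sub_le ((gaussianReal m v).real s) ((gaussianReal 0 v).real s)
    ((gaussianReal 0 1).real s)]

end Gaussian

/-- Exponential convergence of the time-`T` marginal of the
Ornstein–Uhlenbeck process `dX_t = −β_t X_t dt + √(2β_t) dW_t` started at `x₀` to the
standard Gaussian: the marginal is `N(e^{−∫₀ᵀ β} x₀, 1 − e^{−2∫₀ᵀ β})` and for any
measurable set `A`, `|μ_T(A) − N(0,1)(A)| ≤ (x₀² + 2) e^{−bT}`. -/
theorem ou_marginal_tv_convergence
    (β : ℝ → ℝ) (hβ : Continuous β) (b : ℝ) (hb : 0 < b)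
    (x₀ T : ℝ)
    (hβb : ∀ s ∈ Set.Icc (0:ℝ) T, b ≤ β s)
    (hT : Real.log 2 / (2 * b) ≤ T)
    (ᾱ : ℝ) (hᾱ : ᾱ = Real.exp (-(2 * ∫ s in (0:ℝ)..T, β s)))
    (μT : Measure ℝ)
    (hμT : μT = gaussianReal (Real.exp (-∫ s in (0:ℝ)..T, β s) * x₀) (Real.toNNReal (1 - ᾱ))) :
    ∀ A : Set ℝ, MeasurableSet A →
      |(μT A).toReal - (gaussianReal 0 1 A).toReal| ≤ (x₀ ^ 2 + 2) * Real.exp (-(b * T)) := by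
  intro A hA
  set I := ∫ s in (0:ℝ)..T, β s
  set ε := exp (-(b * T))
  have hbT : log 2 ≤ 2 * (b * T) := by
    rw [div_le_iff₀ (by positivity)] at hT
    linarith
  have hI : b * T ≤ I := by
    have h : ∫ _ in (0:ℝ)..T, b ≤ I := intervalIntegral.integral_mono_on
      (by nlinarith [log_pos one_lt_two]) intervalIntegrable_const (hβ.intervalIntegrable 0 T) hβb
    rwa [intervalIntegral.integral_const, smul_eq_mul, sub_zero, mul_comm] at h
  have hε_sq : ε ^ 2 ≤ 1 / 2 := calc
    ε ^ 2 = exp (-(2 * (b * T))) := by rw [← exp_nat_mul]; ring_nf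
    _ ≤ exp (-log 2) := exp_le_exp.2 (by linarith)
    _ = 1 / 2 := by rw [exp_neg, exp_log two_pos, one_div]
  have hᾱ_le : ᾱ ≤ ε ^ 2 := by
    rw [hᾱ, ← exp_nat_mul]
    exact exp_le_exp.2 (by push_cast; linarith)
  have hmean : |exp (-I) * x₀| ≤ ε * |x₀| := by
    rw [abs_mul, abs_of_pos (exp_pos _)]
    exact mul_le_mul_of_nonneg_right (exp_le_exp.2 (by linarith)) (abs_nonneg x₀)
  subst hμT
  calc _ ≤ |exp (-I) * x₀| + ᾱ := abs_measureReal_gaussianReal_sub_standard_le _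
        (hᾱ ▸ (exp_pos _).le) (hᾱ_le.trans hε_sq) hA
    _ ≤ (x₀ ^ 2 + 2) * ε := by
        have hε₀ : 0 < ε := exp_pos _
        have hx₀ : |x₀| ≤ x₀ ^ 2 + 1 := by nlinarith [sq_abs x₀, abs_nonneg x₀]
        nlinarith
end

section
/- Let α and β be standard Borel spaces, let P be a probability measure on α × β, and let π be a probability measure on α. Then: (i) for every probability measure Q on α × β whose first marginal equals π, the Kullback–Leibler divergence satisfies KL(Q ‖ P) ≥ KL(π ‖ P₁), where P₁ denotes the first marginal of P; (ii) the measure Q* = π ⊗ P_cond, obtained by composing π with the conditional (disintegration) kernel of P given its first coordinate, has first marginal π and achieves equality: KL(Q* ‖ P) = KL(π ‖ P₁). Hence Q* is the minimiser of KL(Q ‖ P) over all Q with first marginal π. -/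
open MeasureTheory ProbabilityTheory
open scoped ENNReal Classical

set_option autoImplicit false

/-- The Kullback–Leibler divergence `KL(μ ‖ ν)`, equal to `∫ log(dμ/dν) dμ` when `μ ≪ ν` and the
log-likelihood ratio is `μ`-integrable, and `+∞` otherwise. -/
noncomputable def klDiv' {γ : Type*} [MeasurableSpace γ] (μ ν : Measure γ) : ℝ≥0∞ :=
  if μ ≪ ν ∧ Integrable (llr μ ν) μ then ENNReal.ofReal (∫ x, llr μ ν x ∂μ) else ⊤

/-!
Both parts are instances of general facts about KL divergence. (i) is the data processing
inequality for the measurable map `Prod.fst`, since `Q.fst = π`. (ii) follows from the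
disintegration `P = P.fst ⊗ₘ P.condKernel`: replacing the first marginal while keeping the kernel
fixed leaves the log-likelihood ratio a function of the first coordinate only, so
`KL(π ⊗ₘ κ ‖ P.fst ⊗ₘ κ) = KL(π ‖ P.fst)`.
-/

/-- Mathlib's `klDiv` carries the correction term `ν.real univ - μ.real univ`, which vanishes
between measures of equal total mass. -/
lemma klDiv'_eq_klDiv {γ : Type*} [MeasurableSpace γ] {μ ν : Measure γ}
    (h_univ : μ Set.univ = ν Set.univ) : klDiv' μ ν = InformationTheory.klDiv μ ν := by
  by_cases h : μ ≪ ν ∧ Integrable (llr μ ν) μ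
  · rw [klDiv', if_pos h, InformationTheory.klDiv_of_ac_of_integrable h.1 h.2, measureReal_def,
      measureReal_def, h_univ, add_sub_cancel_right]
  · rw [klDiv', if_neg h, eq_comm, InformationTheory.klDiv_eq_top_iff]
    exact fun hac hint => h ⟨hac, hint⟩

theorem kl_half_bridge_general
    {α β : Type*} [MeasurableSpace α]
    [MeasurableSpace β] [StandardBorelSpace β] [Nonempty β]
    (P : Measure (α × β)) [IsProbabilityMeasure P]
    (π : Measure α) [IsProbabilityMeasure π] :
    (∀ Q : Measure (α × β), IsProbabilityMeasure Q → Q.fst = π →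
      klDiv' π P.fst ≤ klDiv' Q P) ∧
    ((π.compProd P.condKernel).fst = π ∧
      klDiv' (π.compProd P.condKernel) P = klDiv' π P.fst) := by
  refine ⟨fun Q _ hQ_fst => ?_, Measure.fst_compProd π P.condKernel, ?_⟩
  · subst hQ_fst
    rw [klDiv'_eq_klDiv (by simp), klDiv'_eq_klDiv (by simp)]
    exact InformationTheory.klDiv_map_le Q P measurable_fst
  · have h_chain := InformationTheory.klDiv_compProd_left π P.fst P.condKernel
    rw [P.disintegrate P.condKernel] at h_chain
    rw [klDiv'_eq_klDiv (by simp), klDiv'_eq_klDiv (by simp), h_chain]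

/-- **half-bridge.** For probability measures `P` on `α × β` and `π` on `α`
(with `α`, `β` standard Borel): (i) every probability measure `Q` on `α × β` with first
marginal `π` satisfies `KL(Q ‖ P) ≥ KL(π ‖ P.fst)`; (ii) the measure `Q* = π ⊗ₘ P.condKernel`
has first marginal `π` and attains equality, hence minimises `KL(· ‖ P)` subject to the
marginal constraint. -/
theorem kl_half_bridge
    {α β : Type*} [MeasurableSpace α] [StandardBorelSpace α]
    [MeasurableSpace β] [StandardBorelSpace β] [Nonempty β]
    (P : Measure (α × β)) [IsProbabilityMeasure P]
    (π : Measure α) [IsProbabilityMeasure π] :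
    (∀ Q : Measure (α × β), IsProbabilityMeasure Q → Q.fst = π →
      klDiv' π P.fst ≤ klDiv' Q P) ∧
    ((π.compProd P.condKernel).fst = π ∧
      klDiv' (π.compProd P.condKernel) P = klDiv' π P.fst) :=
  kl_half_bridge_general P π
end

section
/- Fix d ≥ 1 and ᾱ ∈ (0,1), and let k(x, x₀) = (2π(1−ᾱ))^{−d/2} exp(−‖x − √ᾱ x₀‖²/(2(1−ᾱ))) be the Gaussian forward transition kernel on ℝ^d. Let π be a probability measure on ℝ^d and define m(x) = ∫ k(x, x₀) dπ(x₀). Then m is everywhere positive and differentiable on ℝ^d, the gradient may be taken under the integral sign, ∇m(x) = ∫ ∇_x k(x, x₀) dπ(x₀), and consequently ∇ log m(x) = (1/m(x)) · ∫ ( −(x − √ᾱ x₀)/(1−ᾱ) ) · k(x, x₀) dπ(x₀); i.e. the score of the Gaussian-smoothed measure equals the average of the forward-transition score ∇_x log k(x, x₀) against the normalized weights k(x, x₀)/m(x) with respect to π. -/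
open MeasureTheory ProbabilityTheory

set_option autoImplicit false

/-- The Gaussian forward transition kernel
`k(x, x₀) = (2π(1−ᾱ))^{−d/2} exp(−‖x − √ᾱ x₀‖²/(2(1−ᾱ)))` on `ℝ^d`. -/
noncomputable def gaussKernel (d : ℕ) (ab : ℝ) (x x₀ : EuclideanSpace ℝ (Fin d)) : ℝ :=
  (2 * Real.pi * (1 - ab)) ^ (-(d : ℝ) / 2) *
    Real.exp (-‖x - Real.sqrt ab • x₀‖ ^ 2 / (2 * (1 - ab)))

/-!
The Gaussian kernel `k(x, x₀)` and its `x`-gradient `k(x, x₀) • (−(x − √ᾱ x₀)/(1−ᾱ))` are bounded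
uniformly in `(x, x₀)`: the gradient because `t e^{−t²/(2s)} ≤ √s`. Bounded functions are
integrable against the finite measure `π`, so dominated convergence lets the gradient pass under
the integral defining `m`; `m > 0` since the kernel is, and the chain rule for `log` gives the score.
-/

open InnerProductSpace

section Gradient

variable {E : Type*} [NormedAddCommGroup E] [InnerProductSpace ℝ E] [CompleteSpace E]

theorem HasGradientAt.log {f : E → ℝ} {g x : E} (hf : HasGradientAt f g x) (hx : f x ≠ 0) :
    HasGradientAt (fun y => Real.log (f y)) ((f x)⁻¹ • g) x := by
  rw [hasGradientAt_iff_hasFDerivAt, map_smul]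
  exact hf.hasFDerivAt.log hx

theorem HasGradientAt.const_mul {f : E → ℝ} {g x : E} (hf : HasGradientAt f g x) (c : ℝ) :
    HasGradientAt (fun y => c * f y) (c • g) x := by
  rw [hasGradientAt_iff_hasFDerivAt, map_smul]
  exact hf.hasFDerivAt.const_mul c

theorem hasGradientAt_exp_neg_norm_sub_sq_div (c : E) (s : ℝ) (x : E) :
    HasGradientAt (fun y => Real.exp (-‖y - c‖ ^ 2 / (2 * s)))
      (Real.exp (-‖x - c‖ ^ 2 / (2 * s)) • (-s⁻¹) • (x - c)) x := by
  have hexponent : HasFDerivAt (fun y => -(2 * s)⁻¹ * ‖y - c‖ ^ 2)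
      (-(2 * s)⁻¹ • 2 • innerSL ℝ (x - c)) x := by
    simpa using (((hasFDerivAt_id x).sub_const c).norm_sq).const_mul (-(2 * s)⁻¹)
  have hexp := hexponent.exp
  simp only [neg_mul, ← neg_div, ← div_eq_inv_mul] at hexp
  refine hexp.congr_fderiv (ContinuousLinearMap.ext fun y => ?_)
  simp only [toDual_apply_apply, smul_apply, innerSL_apply_apply,
    real_inner_smul_left, smul_eq_mul, nsmul_eq_mul, Nat.cast_ofNat]
  by_cases hs : s = 0
  · simp [hs]
  · field_simp

theorem hasGradientAt_integral_of_norm_le {α : Type*} [MeasurableSpace α] {μ : Measure α}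
    [IsFiniteMeasure μ] {F : E → α → ℝ} {G : E → α → E} {B : ℝ} {x : E}
    (hF_meas : ∀ y, AEStronglyMeasurable (F y) μ) (hF_int : Integrable (F x) μ)
    (hG_meas : AEStronglyMeasurable (G x) μ) (hG_le : ∀ y a, ‖G y a‖ ≤ B)
    (hFG : ∀ y a, HasGradientAt (F · a) (G y a) y) :
    HasGradientAt (fun y => ∫ a, F y a ∂μ) (∫ a, G x a ∂μ) x := by
  have hcomm : ∫ a, toDual ℝ E (G x a) ∂μ = toDual ℝ E (∫ a, G x a ∂μ) :=
    (toDual ℝ E).toContinuousLinearEquiv.integral_comp_comm _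
  rw [hasGradientAt_iff_hasFDerivAt, ← hcomm]
  refine hasFDerivAt_integral_of_dominated_of_fderiv_le (bound := fun _ => B) Filter.univ_mem
    (.of_forall hF_meas) hF_int ((toDual ℝ E).continuous.comp_aestronglyMeasurable hG_meas)
    (ae_of_all _ fun a y _ => ?_) (integrable_const B) (ae_of_all _ fun a y _ => (hFG y a))
  simpa using hG_le y a

end Gradient

theorem mul_exp_neg_sq_div_le_sqrt {s : ℝ} (hs : 0 < s) (t : ℝ) :
    t * Real.exp (-t ^ 2 / (2 * s)) ≤ Real.sqrt s := by
  obtain ⟨r, hr, rfl⟩ : ∃ r, 0 < r ∧ s = r ^ 2 :=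
    ⟨Real.sqrt s, Real.sqrt_pos.mpr hs, (Real.sq_sqrt hs.le).symm⟩
  -- `r (1 + t²/(2r²)) − t = r/2 + (r − t)²/(2r) ≥ 0`
  have hlin : t ≤ r * (t ^ 2 / (2 * r ^ 2) + 1) := by
    field_simp
    nlinarith [sq_nonneg (r - t)]
  rw [Real.sqrt_sq hr.le, neg_div, Real.exp_neg, ← div_eq_mul_inv, div_le_iff₀ (Real.exp_pos _)]
  exact hlin.trans (mul_le_mul_of_nonneg_left (Real.add_one_le_exp _) hr.le)

/-- The forward-transition score `∇ₓ log k(x, x₀)`. -/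
noncomputable def gaussScore {d : ℕ} (ab : ℝ) (x x₀ : EuclideanSpace ℝ (Fin d)) :
    EuclideanSpace ℝ (Fin d) :=
  (-(1 - ab)⁻¹ : ℝ) • (x - Real.sqrt ab • x₀)

section GaussKernel

variable {d : ℕ} {ab : ℝ}

theorem gaussKernel_pos (hab : ab < 1) (x x₀ : EuclideanSpace ℝ (Fin d)) :
    0 < gaussKernel d ab x x₀ := by
  have : 0 < 2 * Real.pi * (1 - ab) := by have := Real.pi_pos; nlinarith
  exact mul_pos (Real.rpow_pos_of_pos this _) (Real.exp_pos _)

theorem gaussKernel_le (hab : ab < 1) (x x₀ : EuclideanSpace ℝ (Fin d)) :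
    gaussKernel d ab x x₀ ≤ (2 * Real.pi * (1 - ab)) ^ (-(d : ℝ) / 2) := by
  have hσ : 0 < 1 - ab := by linarith
  refine mul_le_of_le_one_right (Real.rpow_nonneg (by positivity) _) (Real.exp_le_one_iff.mpr ?_)
  exact div_nonpos_of_nonpos_of_nonneg (neg_nonpos.mpr (sq_nonneg _)) (by positivity)

theorem continuous_gaussKernel (x : EuclideanSpace ℝ (Fin d)) :
    Continuous (gaussKernel d ab x) := by
  unfold gaussKernel
  fun_prop

theorem hasGradientAt_gaussKernel (x x₀ : EuclideanSpace ℝ (Fin d)) :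
    HasGradientAt (gaussKernel d ab · x₀) (gaussKernel d ab x x₀ • gaussScore ab x x₀) x := by
  have h := (hasGradientAt_exp_neg_norm_sub_sq_div (Real.sqrt ab • x₀) (1 - ab) x).const_mul
    ((2 * Real.pi * (1 - ab)) ^ (-(d : ℝ) / 2))
  rwa [← smul_assoc, smul_eq_mul] at h

theorem norm_gaussKernel_smul_gaussScore_le (hab : ab < 1) (x x₀ : EuclideanSpace ℝ (Fin d)) :
    ‖gaussKernel d ab x x₀ • gaussScore ab x x₀‖
      ≤ (2 * Real.pi * (1 - ab)) ^ (-(d : ℝ) / 2) * ((1 - ab)⁻¹ * Real.sqrt (1 - ab)) := by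
  have hσ : 0 < 1 - ab := by linarith
  have hC : 0 ≤ (2 * Real.pi * (1 - ab)) ^ (-(d : ℝ) / 2) := Real.rpow_nonneg (by positivity) _
  set t := ‖x - Real.sqrt ab • x₀‖
  calc ‖gaussKernel d ab x x₀ • gaussScore ab x x₀‖
      = (2 * Real.pi * (1 - ab)) ^ (-(d : ℝ) / 2) *
          ((1 - ab)⁻¹ * (t * Real.exp (-t ^ 2 / (2 * (1 - ab))))) := by
        rw [norm_smul, gaussScore, norm_smul, Real.norm_of_nonneg (gaussKernel_pos hab x x₀).le,
          norm_neg, norm_inv, Real.norm_of_nonneg hσ.le, gaussKernel]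
        ring
    _ ≤ _ := by
        gcongr
        exact mul_exp_neg_sq_div_le_sqrt hσ t

variable (π : Measure (EuclideanSpace ℝ (Fin d))) [IsFiniteMeasure π]

theorem integrable_gaussKernel (hab : ab < 1) (x : EuclideanSpace ℝ (Fin d)) :
    Integrable (gaussKernel d ab x) π := by
  refine .of_bound (continuous_gaussKernel x).aestronglyMeasurable
    ((2 * Real.pi * (1 - ab)) ^ (-(d : ℝ) / 2)) (ae_of_all _ fun x₀ => ?_)
  rw [Real.norm_of_nonneg (gaussKernel_pos hab x x₀).le]
  exact gaussKernel_le hab x x₀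

theorem integral_gaussKernel_pos [NeZero π] (hab : ab < 1) (x : EuclideanSpace ℝ (Fin d)) :
    0 < ∫ x₀, gaussKernel d ab x x₀ ∂π := by
  rw [integral_pos_iff_support_of_nonneg (fun x₀ => (gaussKernel_pos hab x x₀).le)
    (integrable_gaussKernel π hab x),
    Function.support_eq_univ fun x₀ => (gaussKernel_pos hab x x₀).ne']
  exact Measure.measure_univ_pos.mpr (NeZero.ne π)

theorem hasGradientAt_integral_gaussKernel (hab : ab < 1) (x : EuclideanSpace ℝ (Fin d)) :
    HasGradientAt (fun y => ∫ x₀, gaussKernel d ab y x₀ ∂π)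
      (∫ x₀, gaussKernel d ab x x₀ • gaussScore ab x x₀ ∂π) x :=
  hasGradientAt_integral_of_norm_le
    (fun y => (continuous_gaussKernel y).aestronglyMeasurable) (integrable_gaussKernel π hab x)
    ((continuous_gaussKernel x).smul (by unfold gaussScore; fun_prop)).aestronglyMeasurable
    (norm_gaussKernel_smul_gaussScore_le hab) hasGradientAt_gaussKernel

end GaussKernel

theorem score_of_gaussian_smoothed_measure_general
    (d : ℕ) (ᾱ : ℝ) (hᾱ : ᾱ ∈ Set.Ioo (0:ℝ) 1)
    (π : Measure (EuclideanSpace ℝ (Fin d))) [IsProbabilityMeasure π]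
    (m : EuclideanSpace ℝ (Fin d) → ℝ)
    (hm : ∀ x, m x = ∫ x₀, gaussKernel d ᾱ x x₀ ∂π) :
    ∀ x : EuclideanSpace ℝ (Fin d),
      0 < m x ∧ DifferentiableAt ℝ m x ∧
      gradient m x = ∫ x₀, gradient (fun x' => gaussKernel d ᾱ x' x₀) x ∂π ∧
      gradient (fun x' => Real.log (m x')) x
        = (m x)⁻¹ • ∫ x₀,
            gaussKernel d ᾱ x x₀ • ((-(1 - ᾱ)⁻¹ : ℝ) • (x - Real.sqrt ᾱ • x₀)) ∂π := by
  intro x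
  obtain rfl : m = fun y => ∫ x₀, gaussKernel d ᾱ y x₀ ∂π := funext hm
  have hgrad := hasGradientAt_integral_gaussKernel π hᾱ.2 x
  have hpos := integral_gaussKernel_pos π hᾱ.2 x
  refine ⟨hpos, hgrad.differentiableAt, ?_, (hgrad.log hpos.ne').gradient⟩
  rw [hgrad.gradient]
  exact integral_congr_ae (ae_of_all _ fun x₀ => (hasGradientAt_gaussKernel x x₀).gradient.symm)

/-- The Gaussian-smoothed density `m(x) = ∫ k(x,x₀) dπ(x₀)` is positive and
differentiable, the gradient passes under the integral sign, and the score of `m` is the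
posterior average of the forward-transition score `−(x − √ᾱ x₀)/(1−ᾱ)`. -/
theorem score_of_gaussian_smoothed_measure
    (d : ℕ) (hd : 1 ≤ d) (ᾱ : ℝ) (hᾱ : ᾱ ∈ Set.Ioo (0:ℝ) 1)
    (π : Measure (EuclideanSpace ℝ (Fin d))) [IsProbabilityMeasure π]
    (m : EuclideanSpace ℝ (Fin d) → ℝ)
    (hm : ∀ x, m x = ∫ x₀, gaussKernel d ᾱ x x₀ ∂π) :
    ∀ x : EuclideanSpace ℝ (Fin d),
      0 < m x ∧ DifferentiableAt ℝ m x ∧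
      gradient m x = ∫ x₀, gradient (fun x' => gaussKernel d ᾱ x' x₀) x ∂π ∧
      gradient (fun x' => Real.log (m x')) x
        = (m x)⁻¹ • ∫ x₀,
            gaussKernel d ᾱ x x₀ • ((-(1 - ᾱ)⁻¹ : ℝ) • (x - Real.sqrt ᾱ • x₀)) ∂π :=
  score_of_gaussian_smoothed_measure_general d ᾱ hᾱ π m hm
end
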